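/- arXiv:1602.04797 — 5 statements merged into one kernel-verified Lean document; each statement's English description precedes it below -/
import Mathlib

section
/- Let p be an odd prime, G a finite group with a non-abelian simple normal subgroup S with C_G(S) = 1 and p dividing |S|, and P a Sylow p-subgroup of G with G = SP and |N_G(P)| odd. Then S ∩ P contains an element z of order p lying in the center Z(P) of P such that z is not conjugate in G to z^{-1}. -/
/-!
Since `S ⊓ P` is a nontrivial normal subgroup of the `p`-group `P`, it meets `Z(P)` in an element
`z` of order `p`. If `z` were conjugate to `z⁻¹`, Burnside's fusion argument would give the
conjugation by some `n ∈ N_G(P)`; as `n` has odd order it is a power of `n²`, which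
centralizes `z`, so `z = z⁻¹`, impossible for an element of odd order `p`.
-/

open Subgroup

section
variable {G : Type*} [Group G]

theorem Commute.of_sq_left_of_odd_orderOf {n z : G} (hn : Odd (orderOf n))
    (h : Commute (n ^ 2) z) : Commute n z := by
  obtain ⟨k, hk⟩ := hn
  have hn_eq : (n ^ 2) ^ (k + 1) = n := by
    rw [← pow_mul, show 2 * (k + 1) = orderOf n + 1 by omega, pow_succ, pow_orderOf_eq_one,
      one_mul]
  exact hn_eq ▸ h.pow_left (k + 1)

theorem eq_one_of_conj_eq_inv_of_odd_orderOf {n z : G} (hn : Odd (orderOf n))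
    (hz : Odd (orderOf z)) (h : n⁻¹ * z * n = z⁻¹) : z = 1 := by
  have hsq_conj : (n ^ 2)⁻¹ * z * n ^ 2 = z :=
    calc (n ^ 2)⁻¹ * z * n ^ 2 = n⁻¹ * (n⁻¹ * z * n) * n := by
          simp only [sq, mul_inv_rev, mul_assoc]
      _ = n⁻¹ * z⁻¹ * n := by rw [h]
      _ = (n⁻¹ * z * n)⁻¹ := by group
      _ = z := by rw [h, inv_inv]
  have hsq : Commute (n ^ 2) z := by
    show n ^ 2 * z = z * n ^ 2
    nth_rw 1 [← hsq_conj]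
    group
  have hz_inv : z = z⁻¹ := by
    rw [← h, mul_assoc, ← (Commute.of_sq_left_of_odd_orderOf hn hsq).eq, inv_mul_cancel_left]
  have hz_dvd : orderOf z ∣ 2 := orderOf_dvd_of_pow_eq_one (by rw [sq]; nth_rw 2 [hz_inv]; group)
  rw [← orderOf_eq_one_iff]
  rcases (Nat.dvd_prime Nat.prime_two).mp hz_dvd with h1 | h2
  · exact h1
  · exact absurd (h2 ▸ hz) (by decide)
end

namespace IsPGroup
variable {p : ℕ} [Fact p.Prime] {H : Type*} [Group H]

theorem dvd_card_of_ne_bot (hH : IsPGroup p H) {K : Subgroup H} (hK : K ≠ ⊥) :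
    p ∣ Nat.card K :=
  ((hH.to_subgroup K).card_eq_or_dvd).resolve_left (mt card_eq_one.mp hK)

theorem inf_center_ne_bot [Finite H] (hH : IsPGroup p H) {K : Subgroup H} [K.Normal]
    (hK : K ≠ ⊥) :
    K ⊓ center H ≠ ⊥ := by
  obtain ⟨k, hk_fixed, hk1⟩ :=
    (hH.of_equiv ConjAct.toConjAct).exists_fixed_point_of_prime_dvd_card_of_fixed_point K
      (hH.dvd_card_of_ne_bot hK) (a := 1) fun g => smul_one g
  refine ne_bot_iff_exists_ne_one.mpr ⟨⟨k, k.2, mem_center_iff.mpr fun g => ?_⟩, ?_⟩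
  · have := congrArg Subtype.val (hk_fixed (ConjAct.toConjAct g))
    simp only [ConjAct.Subgroup.val_conj_smul, ConjAct.smul_def,
      ConjAct.ofConjAct_toConjAct] at this
    nth_rw 2 [← this]; group
  · intro h
    apply hk1
    ext
    simpa using (congrArg Subtype.val h).symm

end IsPGroup

namespace Sylow
variable {G : Type*} [Group G] [Finite G] {p : ℕ} [Fact p.Prime] (P : Sylow p G)

theorem inf_ne_bot_of_dvd_card {N : Subgroup G} [N.Normal] (hpN : p ∣ Nat.card N) :
    N ⊓ P ≠ ⊥ := by
  obtain ⟨x, hx⟩ := exists_prime_orderOf_dvd_card' (G := N) p hpN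
  obtain ⟨Q, hxQ⟩ := (IsPGroup.of_card (n := 1) (G := zpowers (x : G))
    (by rw [Nat.card_zpowers, orderOf_coe, hx, pow_one])).exists_le_sylow
  obtain ⟨g, rfl⟩ := MulAction.exists_smul_eq G P Q
  have hxgP : (x : G) ∈ ((g • P : Sylow p G) : Subgroup G) := hxQ (mem_zpowers _)
  rw [coe_subgroup_smul, mem_pointwise_smul_iff_inv_smul_mem, ← map_inv, MulAut.smul_def,
    MulAut.conj_apply] at hxgP
  intro hbot
  have hx1 : (x : G) = 1 := conj_eq_one_iff.mp <|
    (eq_bot_iff_forall _).mp hbot _ ⟨Normal.conj_mem inferInstance _ x.2 g⁻¹, hxgP⟩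
  rw [← orderOf_coe, hx1, orderOf_one] at hx
  exact (Fact.out : p.Prime).one_lt.ne hx

theorem exists_orderOf_eq_prime_mem_inf_centralizer {N : Subgroup G} [N.Normal]
    (hpN : p ∣ Nat.card N) :
    ∃ z ∈ N ⊓ P, orderOf z = p ∧ z ∈ centralizer (P : Set G) := by
  have hK : N.subgroupOf P ≠ ⊥ := fun h =>
    P.inf_ne_bot_of_dvd_card hpN (disjoint_iff.mp (subgroupOf_eq_bot.mp h))
  obtain ⟨w, hw⟩ := exists_prime_orderOf_dvd_card' p
    (P.isPGroup'.dvd_card_of_ne_bot (P.isPGroup'.inf_center_ne_bot hK))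
  obtain ⟨hwN, hwZ⟩ := w.2
  refine ⟨((w : P) : G), ⟨mem_subgroupOf.mp hwN, (w : P).2⟩, ?_, fun g hg => ?_⟩
  · rw [orderOf_coe, orderOf_coe, hw]
  · exact congrArg Subtype.val (mem_center_iff.mp hwZ ⟨g, hg⟩)

theorem not_isConj_inv_of_mem_centralizer (hodd : Odd (Nat.card (normalizer (P : Set G))))
    {z : G} (hz : z ∈ centralizer (P : Set G)) (hz_odd : Odd (orderOf z)) (hz1 : z ≠ 1) :
    ¬ IsConj z z⁻¹ := by
  intro hconj
  obtain ⟨c, hc⟩ := isConj_iff.mp hconj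
  have hc' : c⁻¹⁻¹ * z * c⁻¹ = z⁻¹ := by rwa [inv_inv]
  obtain ⟨n, hn, hnz⟩ :=
    P.conj_eq_normalizer_conj_of_mem_centralizer z c⁻¹ hz (hc' ▸ inv_mem hz)
  have hn_odd : Odd (orderOf n) :=
    hodd.of_dvd_nat (orderOf_mk n hn ▸ orderOf_dvd_natCard _)
  exact hz1 (eq_one_of_conj_eq_inv_of_odd_orderOf hn_odd hz_odd (hc' ▸ hnz).symm)

end Sylow

theorem exists_nonreal_pcentral_element_general
    {G : Type*} [Group G] [Finite G] (p : ℕ) [Fact p.Prime] (hp2 : Odd p)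
    (S : Subgroup G) (hSnormal : S.Normal)
    (hpS : p ∣ Nat.card S)
    (P : Sylow p G)
    (hodd : Odd (Nat.card (Subgroup.normalizer ((P : Subgroup G) : Set G)))) :
    ∃ z : G, z ∈ S ⊓ (P : Subgroup G) ∧ orderOf z = p ∧
      z ∈ Subgroup.centralizer ((P : Subgroup G) : Set G) ∧
      ¬ IsConj z z⁻¹ := by
  obtain ⟨z, hzSP, hz_ord, hz_cent⟩ := P.exists_orderOf_eq_prime_mem_inf_centralizer hpS
  have hz1 : z ≠ 1 := fun h => (Fact.out : p.Prime).one_lt.ne (by rw [← hz_ord, h, orderOf_one])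
  exact ⟨z, hzSP, hz_ord, hz_cent,
    P.not_isConj_inv_of_mem_centralizer hodd hz_cent (hz_ord ▸ hp2) hz1⟩

theorem exists_nonreal_pcentral_element
    {G : Type*} [Group G] [Finite G] (p : ℕ) [Fact p.Prime] (hp2 : Odd p)
    (S : Subgroup G) (hSnormal : S.Normal) (hsimple : IsSimpleGroup S)
    (hnonab : ¬ ∀ a b : S, a * b = b * a)
    (hcent : Subgroup.centralizer (S : Set G) = ⊥)
    (hpS : p ∣ Nat.card S)
    (P : Sylow p G)
    (hSP : ∀ g : G, ∃ s ∈ S, ∃ x ∈ (P : Subgroup G), g = s * x)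
    (hodd : Odd (Nat.card (Subgroup.normalizer ((P : Subgroup G) : Set G)))) :
    ∃ z : G, z ∈ S ⊓ (P : Subgroup G) ∧ orderOf z = p ∧
      z ∈ Subgroup.centralizer ((P : Subgroup G) : Set G) ∧
      ¬ IsConj z z⁻¹ :=
  exists_nonreal_pcentral_element_general p hp2 S hSnormal hpS P hodd
end

section
/- Let p be an odd prime, G a finite group with a non-abelian simple normal subgroup S with C_G(S) = 1 and p dividing |S|, and P a Sylow p-subgroup of G with G = SP and |N_G(P)| odd. Then every p-element y ≠ 1 of S that lies in the center of some Sylow p-subgroup of G is not conjugate in G to y^{-1}. -/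
/-! Burnside's fusion argument: if `g` conjugates `y` to `y⁻¹` and `y` centralizes a Sylow
`p`-subgroup `Q`, then some `n ∈ N_G(Q)` already does. As `N_G(Q)` has odd order, `n` is a power
of `n²`, which centralizes `y`; hence `y = y⁻¹`, impossible for a nontrivial element of odd order. -/

open Subgroup

theorem Sylow.card_normalizer_eq {G : Type*} [Group G] [Finite G] {p : ℕ} [Fact p.Prime]
    (P Q : Sylow p G) :
    Nat.card (normalizer (P : Set G)) = Nat.card (normalizer (Q : Set G)) := by
  have hindex : (normalizer (P : Set G)).index = (normalizer (Q : Set G)).index := by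
    rw [← P.card_eq_index_normalizer, ← Q.card_eq_index_normalizer]
  refine Nat.eq_of_mul_eq_mul_right
    (Nat.pos_of_ne_zero (normalizer (P : Set G)).index_ne_zero_of_finite) ?_
  rw [card_mul_index, hindex, card_mul_index]

theorem inv_eq_self_of_conj_eq_inv_of_odd_orderOf {G : Type*} [Group G] {m y : G}
    (hm : Odd (orderOf m)) (h : m * y * m⁻¹ = y⁻¹) : y⁻¹ = y := by
  have hsemi : SemiconjBy m y y⁻¹ := by rw [SemiconjBy, ← h]; group
  have hsq : Commute (m * m) y := by
    have := hsemi.inv_right.mul_left hsemi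
    rwa [inv_inv] at this
  obtain ⟨k, hk⟩ := hm
  have hm_pow : (m * m) ^ (k + 1) = m := by
    rw [← pow_two, ← pow_mul, mul_add, mul_one, pow_succ, ← hk, pow_orderOf_eq_one, one_mul]
  have hcomm : Commute m y := hm_pow ▸ hsq.pow_left (k + 1)
  exact mul_right_cancel (hsemi.eq.symm.trans hcomm.eq)

theorem eq_one_of_inv_eq_self_of_odd_orderOf {G : Type*} [Group G] {y : G}
    (hy : Odd (orderOf y)) (h : y⁻¹ = y) : y = 1 := by
  have hdvd : orderOf y ∣ 2 := orderOf_dvd_of_pow_eq_one <| by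
    rw [pow_two, ← inv_eq_iff_mul_eq_one, h]
  have hcop : (orderOf y).Coprime 2 := hy.coprime_two_right
  exact orderOf_eq_one_iff.mp (hcop.eq_one_of_dvd hdvd)

theorem pcentral_pelements_nonreal_general
    {G : Type*} [Group G] [Finite G] (p : ℕ) [Fact p.Prime] (hp2 : Odd p)
    (P : Sylow p G)
    (hodd : Odd (Nat.card (Subgroup.normalizer ((P : Subgroup G) : Set G))))
    (y : G) (hy1 : y ≠ 1) (hyp : ∃ k : ℕ, orderOf y = p ^ k)
    (hc : ∃ Q : Sylow p G, y ∈ (Q : Subgroup G) ∧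
      y ∈ Subgroup.centralizer ((Q : Subgroup G) : Set G)) :
    ¬ IsConj y y⁻¹ := by
  intro hconj
  obtain ⟨Q, -, hyQ⟩ := hc
  obtain ⟨g, hg⟩ := isConj_iff.mp hconj
  obtain ⟨n, hnQ, hn⟩ := Q.conj_eq_normalizer_conj_of_mem_centralizer y g⁻¹ hyQ
    (by rw [inv_inv, hg]; exact inv_mem hyQ)
  have hn_odd : Odd (orderOf n⁻¹) := by
    rw [orderOf_inv]
    exact (P.card_normalizer_eq Q ▸ hodd).of_dvd_nat (orderOf_dvd_natCard _ hnQ)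
  have hy_inv : y⁻¹ = y := inv_eq_self_of_conj_eq_inv_of_odd_orderOf hn_odd
    (by rw [inv_inv, ← hn, inv_inv, hg])
  obtain ⟨k, hk⟩ := hyp
  exact hy1 (eq_one_of_inv_eq_self_of_odd_orderOf (hk ▸ hp2.pow) hy_inv)

theorem pcentral_pelements_nonreal
    {G : Type*} [Group G] [Finite G] (p : ℕ) [Fact p.Prime] (hp2 : Odd p)
    (S : Subgroup G) (hSnormal : S.Normal) (hsimple : IsSimpleGroup S)
    (hnonab : ¬ ∀ a b : S, a * b = b * a)
    (hcent : Subgroup.centralizer (S : Set G) = ⊥)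
    (hpS : p ∣ Nat.card S)
    (P : Sylow p G)
    (hSP : ∀ g : G, ∃ s ∈ S, ∃ x ∈ (P : Subgroup G), g = s * x)
    (hodd : Odd (Nat.card (Subgroup.normalizer ((P : Subgroup G) : Set G))))
    (y : G) (hyS : y ∈ S) (hy1 : y ≠ 1) (hyp : ∃ k : ℕ, orderOf y = p ^ k)
    (hc : ∃ Q : Sylow p G, y ∈ (Q : Subgroup G) ∧
      y ∈ Subgroup.centralizer ((Q : Subgroup G) : Set G)) :
    ¬ IsConj y y⁻¹ :=
  pcentral_pelements_nonreal_general p hp2 P hodd y hy1 hyp hc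
end

section
/- Let p be an odd prime and n ≥ p + 2 a natural number. Then every element t of order p in the alternating group Alt(n) is real in Alt(n), i.e. t is conjugate in Alt(n) to t^{-1}. -/
/-!
Since `t` and `t⁻¹` have the same cycle type, they are conjugate in `Sym(n)`, and a conjugator
can be made even by multiplying it with an odd permutation commuting with `t`. Such a permutation
exists because `t`, a product of `p`-cycles on `n ≥ p + 2` points, either has two `p`-cycles
(which can be interchanged) or has two fixed points (which can be transposed).
-/

open Equiv Equiv.Perm

variable {α : Type*} [Fintype α] [DecidableEq α]

theorem alternatingGroup.isConj_of_not_centralizer_le {σ τ : alternatingGroup α}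
    (hc : IsConj (σ : Perm α) τ) (hσ : ¬Subgroup.centralizer {(σ : Perm α)} ≤ alternatingGroup α) :
    IsConj σ τ := by
  obtain ⟨c, hc⟩ := isConj_iff.mp hc
  obtain ⟨z, hz, hz_odd⟩ := SetLike.not_le_iff_exists.mp hσ
  rw [Subgroup.mem_centralizer_singleton_iff] at hz
  rw [mem_alternatingGroup, ← ne_eq, Int.units_ne_iff_eq_neg] at hz_odd
  rcases Int.units_eq_one_or (sign c) with hc_even | hc_odd
  · exact isConj_iff.mpr ⟨⟨c, hc_even⟩, Subtype.ext hc⟩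
  · refine isConj_iff.mpr ⟨⟨c * z, by simp [mem_alternatingGroup, hc_odd, hz_odd]⟩, Subtype.ext ?_⟩
    simp only [Subgroup.coe_mul, Subgroup.coe_inv, mul_inv_rev, ← hc]
    rw [mul_assoc c z, hz]
    group

theorem Equiv.Perm.not_centralizer_le_alternatingGroup_of_orderOf_prime {g : Perm α} {p : ℕ}
    (hp : p.Prime) (hg : orderOf g = p) (hcard : p + 2 ≤ Fintype.card α) :
    ¬Subgroup.centralizer {g} ≤ alternatingGroup α := by
  subst hg
  obtain ⟨k, hk⟩ := cycleType_prime_order hp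
  rw [centralizer_le_alternating_iff, hk]
  rintro ⟨-, hfix, hcount⟩
  have hk0 : k = 0 := by simpa using hcount (orderOf g)
  simp only [hk0, Multiset.sum_replicate, smul_eq_mul, zero_add, one_mul] at hfix
  omega

theorem alternating_order_p_real_general
    (p : ℕ) (hp : p.Prime) (n : ℕ) (hn : p + 2 ≤ n)
    (t : alternatingGroup (Fin n)) (ht : orderOf t = p) :
    IsConj t t⁻¹ := by
  refine alternatingGroup.isConj_of_not_centralizer_le ?_ ?_
  · exact isConj_iff_cycleType_eq.mpr (cycleType_inv _).symm
  · refine not_centralizer_le_alternatingGroup_of_orderOf_prime hp ?_ (by simpa using hn)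
    rw [orderOf_submonoid, ht]

theorem alternating_order_p_real
    (p : ℕ) (hp : p.Prime) (hodd : Odd p) (n : ℕ) (hn : p + 2 ≤ n)
    (t : alternatingGroup (Fin n)) (ht : orderOf t = p) :
    IsConj t t⁻¹ :=
  alternating_order_p_real_general p hp n hn t ht
end

section
/- Let p be an odd prime, n ≥ p + 2 a natural number, and Q a Sylow p-subgroup of the alternating group Alt(n). Then the order of the normalizer N_{Alt(n)}(Q) is even. -/
/-!
Since `p` is odd, the Sylow `p`-subgroups of `Alt(n)` are those of `Sym(n)`, and they are
conjugate, so their normalizers have the same order: it suffices to find one Sylow subgroup whose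
normalizer contains an even involution. Write `n = a p + r` with `r < p`. If `P` is a Sylow
subgroup of `Sym(a)`, the wreath product `C_p ≀ P`, acting on `a` blocks `ZMod p` and fixing `r`
points, is a Sylow subgroup of `Sym(n)`. Its normalizer contains the involution `ν` negating every
block, and `ν` commutes with the lifts of permutations of the blocks normalizing `P` and with all
permutations of the fixed points. As `n ≥ p + 2`, either `a ≥ 2`, and the Frattini argument gives
an involution normalizing `P`, or `r ≥ 2`, and a transposition of fixed points will do. Finally, of
two distinct commuting involutions `s` and `t`, one of `s`, `t`, `s t` is even.
-/

open Equiv Equiv.Perm Subgroup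
open scoped Nat

theorem Equiv.Perm.le_alternatingGroup_of_isPGroup {α : Type*} [Fintype α] [DecidableEq α]
    {p : ℕ} (hp : Odd p) {H : Subgroup (Perm α)} (hH : IsPGroup p H) :
    H ≤ alternatingGroup α := by
  intro σ hσ
  obtain ⟨k, hk⟩ := hH ⟨σ, hσ⟩
  calc sign σ = sign σ ^ p ^ k := by
        rw [Int.units_pow_eq_pow_mod_two, Nat.odd_iff.mp hp.pow, pow_one]
    _ = 1 := by rw [← map_pow, show σ ^ p ^ k = 1 from congrArg Subtype.val hk, map_one]

theorem exists_orderOf_eq_two_mem_ker_of_commute {G : Type*} [Group G] (χ : G →* ℤˣ)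
    {H : Subgroup G} {s t : G} (hs : s ∈ H) (ht : t ∈ H) (hs2 : orderOf s = 2)
    (ht2 : orderOf t = 2) (hst : s ≠ t) (hcomm : Commute s t) :
    ∃ u ∈ H, orderOf u = 2 ∧ χ u = 1 := by
  rcases Int.units_eq_one_or (χ s) with hχs | hχs
  · exact ⟨s, hs, hs2, hχs⟩
  rcases Int.units_eq_one_or (χ t) with hχt | hχt
  · exact ⟨t, ht, ht2, hχt⟩
  have hs1 : s ^ 2 = 1 := hs2 ▸ pow_orderOf_eq_one s
  have ht1 : t ^ 2 = 1 := ht2 ▸ pow_orderOf_eq_one t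
  refine ⟨s * t, mul_mem hs ht, orderOf_eq_prime ?_ ?_, by simp [hχs, hχt]⟩
  · rw [hcomm.mul_pow, hs1, ht1, one_mul]
  · rw [Ne, mul_eq_one_iff_eq_inv, inv_eq_of_mul_eq_one_left (by rwa [← pow_two])]
    exact hst

namespace Sylow

variable {p : ℕ} [Fact p.Prime]

theorem card_normalizer_eq_s7 {G : Type*} [Group G] [Finite G] (P Q : Sylow p G) :
    Nat.card (normalizer ((P : Subgroup G) : Set G)) =
      Nat.card (normalizer ((Q : Subgroup G) : Set G)) := by
  have key (R : Sylow p G) :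
      Nat.card (normalizer ((R : Subgroup G) : Set G)) * Nat.card (Sylow p G) = Nat.card G := by
    rw [R.card_eq_index_normalizer]
    exact card_mul_index _
  exact Nat.eq_of_mul_eq_mul_right Nat.card_pos ((key P).trans (key Q).symm)

variable {α : Type*} [Fintype α] [DecidableEq α]

/-- By the Frattini argument, `Sym(α) = N(P) Alt(α)`. -/
theorem exists_sign_eq_neg_one_mem_normalizer [Nontrivial α] (hp : Odd p)
    (P : Sylow p (Perm α)) : ∃ g ∈ normalizer (P : Set (Perm α)), sign g = -1 := by
  by_contra! h
  have hle : normalizer (P : Set (Perm α)) ≤ alternatingGroup α := fun g hg ↦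
    (Int.units_eq_one_or _).resolve_right (h g hg)
  have htop := P.normalizer_sup_eq_top' (le_alternatingGroup_of_isPGroup hp P.isPGroup')
  rw [sup_eq_right.mpr hle] at htop
  obtain ⟨a, b, hab⟩ := exists_pair_ne α
  have hswap := mem_alternatingGroup.mp (htop ▸ mem_top (swap a b))
  rw [sign_swap hab] at hswap
  exact absurd hswap (by decide)

theorem exists_orderOf_eq_two_mem_normalizer [Nontrivial α] (hp : Odd p)
    (P : Sylow p (Perm α)) : ∃ y ∈ normalizer (P : Set (Perm α)), orderOf y = 2 := by
  obtain ⟨g, hgN, hg⟩ := P.exists_sign_eq_neg_one_mem_normalizer hp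
  have h2 : 2 ∣ Nat.card (normalizer (P : Set (Perm α))) :=
    calc 2 = orderOf (sign g) := by rw [hg, orderOf_eq_prime (Int.units_sq _) (by decide)]
      _ ∣ orderOf g := orderOf_map_dvd _ _
      _ ∣ _ := orderOf_dvd_natCard _ hgN
  obtain ⟨y, hy⟩ := exists_prime_orderOf_dvd_card' 2 h2
  exact ⟨y, y.2, (orderOf_coe y).trans hy⟩

theorem exists_even_involution_mem_normalizer_of_equiv {β : Type*} [Fintype β] [DecidableEq β]
    (e : β ≃ α)
    (h : ∃ P : Sylow p (Perm β), ∃ g ∈ normalizer (P : Set (Perm β)), orderOf g = 2 ∧ sign g = 1) :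
    ∃ P : Sylow p (Perm α), ∃ g ∈ normalizer (P : Set (Perm α)), orderOf g = 2 ∧ sign g = 1 := by
  obtain ⟨P, g, hgN, hg2, hg⟩ := h
  let E := e.permCongrHom
  refine ⟨P.mapSurjective (f := E.toMonoidHom) E.surjective, E g, ?_, ?_, ?_⟩
  · show E g ∈ normalizer (((P : Subgroup (Perm β)).map E.toMonoidHom : Subgroup (Perm α)) :
      Set (Perm α))
    rw [← map_equiv_normalizer_eq]
    exact mem_map_of_mem _ hgN
  · rw [← hg2]; exact orderOf_injective E.toMonoidHom E.injective g
  · exact (sign_permCongr e g).trans hg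

end Sylow

namespace Equiv.Perm

variable {X A : Type*} [AddGroup A]

def blockShear (π : Perm X) (v : X → A) : Perm (X × A) :=
  prodShear π fun x ↦ Equiv.addRight (v x)

@[simp]
theorem blockShear_apply (π : Perm X) (v : X → A) (z : X × A) :
    blockShear π v z = (π z.1, z.2 + v z.1) := rfl

theorem blockShear_mul (π π' : Perm X) (v v' : X → A) :
    blockShear π v * blockShear π' v' = blockShear (π * π') fun x ↦ v' x + v (π' x) := by
  ext z <;> simp [add_assoc]

theorem blockShear_inv (π : Perm X) (v : X → A) :
    (blockShear π v)⁻¹ = blockShear π⁻¹ fun x ↦ -v (π⁻¹ x) := by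
  rw [inv_eq_iff_mul_eq_one, blockShear_mul]
  ext z <;> simp

theorem blockShear_inj {π π' : Perm X} {v v' : X → A} :
    blockShear π v = blockShear π' v' ↔ π = π' ∧ v = v' := by
  refine ⟨fun h ↦ ⟨?_, ?_⟩, fun h ↦ h.1 ▸ h.2 ▸ rfl⟩
  · ext x
    simpa using congrArg Prod.fst (DFunLike.congr_fun h (x, 0))
  · funext x
    simpa using congrArg Prod.snd (DFunLike.congr_fun h (x, 0))

variable (A) in
/-- The permutational wreath product `A ≀ P`, with `A` acting on itself by translations. -/
def wreath (P : Subgroup (Perm X)) : Subgroup (Perm (X × A)) where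
  carrier := {σ | ∃ π ∈ P, ∃ v, blockShear π v = σ}
  mul_mem' := by
    rintro _ _ ⟨π, hπ, v, rfl⟩ ⟨π', hπ', v', rfl⟩
    exact ⟨_, mul_mem hπ hπ', _, (blockShear_mul ..).symm⟩
  one_mem' := ⟨1, P.one_mem, 0, by ext <;> simp⟩
  inv_mem' := by
    rintro _ ⟨π, hπ, v, rfl⟩
    exact ⟨_, inv_mem hπ, _, (blockShear_inv ..).symm⟩

theorem card_wreath [Finite X] (P : Subgroup (Perm X)) :
    Nat.card (wreath A P) = Nat.card A ^ Nat.card X * Nat.card P := by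
  let f : P × (X → A) → wreath A P := fun πv ↦ ⟨blockShear πv.1 πv.2, πv.1, πv.1.2, πv.2, rfl⟩
  have hf : Function.Bijective f := by
    refine ⟨fun πv πv' h ↦ ?_, fun ⟨σ, π, hπ, v, hσ⟩ ↦ ⟨(⟨π, hπ⟩, v), Subtype.ext hσ⟩⟩
    obtain ⟨hπ, hv⟩ := blockShear_inj.mp (congrArg Subtype.val h)
    exact Prod.ext (Subtype.ext hπ) hv
  rw [← Nat.card_congr (Equiv.ofBijective f hf), Nat.card_prod, Nat.card_fun, mul_comm]

theorem prodCongr_mem_normalizer_wreath [Finite X] [Finite A] {P : Subgroup (Perm X)}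
    {y : Perm X} (hy : y ∈ normalizer (P : Set (Perm X))) (f : A ≃+ A) :
    prodCongr y f.toEquiv ∈ normalizer (wreath A P : Set (Perm (X × A))) := by
  refine mem_normalizer_fintype ?_
  rintro _ ⟨π, hπ, v, rfl⟩
  refine ⟨y * π * y⁻¹, (mem_normalizer_iff.mp hy π).mp hπ, fun x ↦ f (v (y⁻¹ x)), ?_⟩
  ext z <;> simp [Perm.mul_apply]

variable (X) in
def sumCongrLeftHom (R : Type*) : Perm X →* Perm (X ⊕ R) :=
  (sumCongrHom X R).comp (MonoidHom.inl _ _)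

theorem sumCongrLeftHom_injective (R : Type*) : Function.Injective (sumCongrLeftHom X R) :=
  sumCongrHom_injective.comp (Prod.mk_left_injective 1)

end Equiv.Perm

namespace Sylow

variable {p : ℕ} [Fact p.Prime]

section

variable {X : Type*} [Finite X]

def wreath (P : Sylow p (Perm X)) : Sylow p (Perm (X × ZMod p)) :=
  ofCard (Perm.wreath (ZMod p) P) <| by
    rw [Perm.card_wreath, P.card_eq_multiplicity, Nat.card_perm, Nat.card_perm, Nat.card_prod,
      Nat.card_zmod, Nat.factorization_def _ Fact.out, Nat.factorization_def _ Fact.out,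
      mul_comm _ p, padicValNat_factorial_mul, pow_add, mul_comm]

theorem prodCongr_mem_normalizer_wreath (P : Sylow p (Perm X)) {y : Perm X}
    (hy : y ∈ normalizer (P : Set (Perm X))) (f : ZMod p ≃+ ZMod p) :
    prodCongr y f.toEquiv ∈ normalizer (P.wreath : Set (Perm (X × ZMod p))) :=
  Perm.prodCongr_mem_normalizer_wreath hy f

def extendSum (R : Type*) [Finite R] (P : Sylow p (Perm X))
    (h : padicValNat p (Nat.card X + Nat.card R)! = padicValNat p (Nat.card X)!) :
    Sylow p (Perm (X ⊕ R)) :=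
  ofCard (P.map (sumCongrLeftHom X R)) <| by
    rw [card_map_of_injective (sumCongrLeftHom_injective R), P.card_eq_multiplicity,
      Nat.card_perm, Nat.card_perm, Nat.card_sum, Nat.factorization_def _ Fact.out,
      Nat.factorization_def _ Fact.out, h]

theorem sumCongr_mem_normalizer_extendSum {R : Type*} [Finite R] {P : Sylow p (Perm X)}
    (h : padicValNat p (Nat.card X + Nat.card R)! = padicValNat p (Nat.card X)!)
    {g : Perm X} (hg : g ∈ normalizer (P : Set (Perm X))) (τ : Perm R) :
    g.sumCongr τ ∈ normalizer (P.extendSum R h : Set (Perm (X ⊕ R))) := by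
  refine mem_normalizer_fintype ?_
  rintro _ ⟨π, hπ, rfl⟩
  exact ⟨g * π * g⁻¹, (mem_normalizer_iff.mp hg π).mp hπ,
    by simp [sumCongrLeftHom, sumCongr_mul, sumCongr_inv]⟩

end

theorem exists_even_involution_mem_normalizer_extendSum_wreath (hp : Odd p)
    {X R : Type*} [Fintype X] [DecidableEq X] [Nonempty X] [Fintype R] [DecidableEq R]
    (P : Sylow p (Perm X))
    (h : padicValNat p (Nat.card (X × ZMod p) + Nat.card R)! =
      padicValNat p (Nat.card (X × ZMod p))!)
    {y : Perm X} (hyN : y ∈ normalizer (P : Set (Perm X))) (hy : y ^ 2 = 1)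
    {τ : Perm R} (hτ : τ ^ 2 = 1) (hyτ : y ≠ 1 ∨ τ ≠ 1) :
    ∃ g ∈ normalizer (P.wreath.extendSum R h : Set (Perm ((X × ZMod p) ⊕ R))),
      orderOf g = 2 ∧ sign g = 1 := by
  have : Fact (2 < p) :=
    ⟨(Fact.out : p.Prime).two_le.lt_of_ne (by rintro rfl; exact absurd hp (by decide))⟩
  obtain ⟨x₀⟩ := ‹Nonempty X›
  let ν : Perm ((X × ZMod p) ⊕ R) := (prodCongr 1 (AddEquiv.neg (ZMod p)).toEquiv).sumCongr 1
  let t : Perm ((X × ZMod p) ⊕ R) := (prodCongr y (AddEquiv.refl (ZMod p)).toEquiv).sumCongr τ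
  have hy2 : ∀ x, y (y x) = x := fun x ↦ by rw [← Perm.mul_apply, ← sq, hy, Perm.one_apply]
  have hτ2 : ∀ i, τ (τ i) = i := fun i ↦ by rw [← Perm.mul_apply, ← sq, hτ, Perm.one_apply]
  have hν : orderOf ν = 2 := by
    refine orderOf_eq_prime (by ext (⟨x, c⟩ | i) <;> simp [ν, sq]) fun h ↦ ?_
    exact ZMod.neg_one_ne_one <| congrArg Prod.snd <|
      Sum.inl_injective (a₁ := (x₀, -1)) (a₂ := (x₀, 1)) (DFunLike.congr_fun h (.inl (x₀, 1)))
  have ht : orderOf t = 2 := by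
    refine orderOf_eq_prime (by ext (⟨x, c⟩ | i) <;> simp [t, sq, hy2, hτ2]) fun h ↦ ?_
    refine hyτ.elim (fun hy1 ↦ hy1 ?_) (fun hτ1 ↦ hτ1 ?_)
    · refine Equiv.ext fun x ↦ ?_
      simpa [t] using DFunLike.congr_fun h (.inl (x, 0))
    · refine Equiv.ext fun i ↦ ?_
      simpa [t] using DFunLike.congr_fun h (.inr i)
  have hνt : ν ≠ t := fun h ↦ ZMod.neg_one_ne_one <| congrArg Prod.snd <|
    Sum.inl_injective (a₁ := (x₀, -1)) (a₂ := (y x₀, 1)) (DFunLike.congr_fun h (.inl (x₀, 1)))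
  have hcomm : Commute ν t := by
    ext (⟨x, c⟩ | i) <;> simp [ν, t]
  exact exists_orderOf_eq_two_mem_ker_of_commute sign
    (sumCongr_mem_normalizer_extendSum h (P.prodCongr_mem_normalizer_wreath (one_mem _) _) 1)
    (sumCongr_mem_normalizer_extendSum h (P.prodCongr_mem_normalizer_wreath hyN _) τ)
    hν ht hνt hcomm

theorem exists_even_involution_mem_normalizer (hp : Odd p) {α : Type*} [Fintype α]
    [DecidableEq α] (hα : p + 2 ≤ Fintype.card α) :
    ∃ P : Sylow p (Perm α), ∃ g ∈ normalizer (P : Set (Perm α)), orderOf g = 2 ∧ sign g = 1 := by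
  set a := Fintype.card α / p
  set r := Fintype.card α % p
  have hp0 : 0 < p := (Fact.out : p.Prime).pos
  have ha : 1 ≤ a := (Nat.one_le_div_iff hp0).mpr (by omega)
  have hcard : padicValNat p (Nat.card (Fin a × ZMod p) + Nat.card (Fin r))! =
      padicValNat p (Nat.card (Fin a × ZMod p))! := by
    rw [Nat.card_prod, Nat.card_fin, Nat.card_zmod, Nat.card_fin, mul_comm a]
    exact padicValNat_factorial_mul_add a (Nat.mod_lt _ hp0)
  have e : (Fin a × ZMod p) ⊕ Fin r ≃ α := Fintype.equivOfCardEq <| by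
    rw [Fintype.card_sum, Fintype.card_prod, Fintype.card_fin, ZMod.card, Fintype.card_fin,
      mul_comm, Nat.div_add_mod]
  have : Nonempty (Fin a) := ⟨⟨0, ha⟩⟩
  obtain ⟨Pa⟩ : Nonempty (Sylow p (Perm (Fin a))) := inferInstance
  obtain ⟨y, hyN, τ, hy, hτ, hyτ⟩ : ∃ y ∈ normalizer (Pa : Set (Perm (Fin a))), ∃ τ : Perm (Fin r),
      y ^ 2 = 1 ∧ τ ^ 2 = 1 ∧ (y ≠ 1 ∨ τ ≠ 1) := by
    rcases le_or_gt 2 a with ha2 | ha2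
    · have : Nontrivial (Fin a) := Fin.nontrivial_iff_two_le.mpr ha2
      obtain ⟨y, hyN, hy⟩ := Pa.exists_orderOf_eq_two_mem_normalizer hp
      exact ⟨y, hyN, 1, hy ▸ pow_orderOf_eq_one y, one_pow 2,
        .inl fun h ↦ by simp [h] at hy⟩
    · have hr : 2 ≤ r := by
        have ha1 : a = 1 := by omega
        have hdiv : p * a + r = Fintype.card α := Nat.div_add_mod _ _
        rw [ha1] at hdiv
        omega
      refine ⟨1, one_mem _, swap ⟨0, by omega⟩ ⟨1, by omega⟩, one_pow 2,
        (sq _).trans (swap_mul_self _ _), .inr (swap_eq_one_iff.not.mpr (by simp [Fin.ext_iff]))⟩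
  exact exists_even_involution_mem_normalizer_of_equiv e
    ⟨_, Pa.exists_even_involution_mem_normalizer_extendSum_wreath hp hcard hyN hy hτ hyτ⟩

end Sylow

theorem alternating_sylow_normalizer_even
    (p : ℕ) [Fact p.Prime] (hodd : Odd p) (n : ℕ) (hn : p + 2 ≤ n)
    (Q : Sylow p (alternatingGroup (Fin n))) :
    Even (Nat.card (Subgroup.normalizer ((Q : Subgroup (alternatingGroup (Fin n))) : Set (alternatingGroup (Fin n))))) := by
  obtain ⟨P, g, hgN, hg2, hgA⟩ :=
    Sylow.exists_even_involution_mem_normalizer hodd (α := Fin n) (by simpa using hn)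
  replace hgA : g ∈ alternatingGroup (Fin n) := hgA
  have hPA := le_alternatingGroup_of_isPGroup hodd P.isPGroup'
  have hgN' : ⟨g, hgA⟩ ∈ normalizer ((P.subtype hPA : Subgroup (alternatingGroup (Fin n))) :
      Set (alternatingGroup (Fin n))) := by
    rw [Sylow.coe_subtype, ← subgroupOf_normalizer_eq hPA]
    exact hgN
  rw [Q.card_normalizer_eq_s7 (P.subtype hPA), even_iff_two_dvd, ← hg2, ← orderOf_mk g hgA]
  exact orderOf_dvd_natCard _ hgN'
end

section
/- Let p be a prime, n ≥ 2 a natural number, and P a Sylow p-subgroup of the symmetric group Sym(n). Then the order of the normalizer N_{Sym(n)}(P) is even. -/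
/-! For `p = 2`, the Sylow subgroup is a nontrivial `2`-group inside its normalizer. For odd `p`,
the Sylow subgroup has odd order, so it lies in the alternating group; by Frattini's argument its
normalizer then supplements the alternating group, hence contains an odd permutation, and a
subgroup containing an odd permutation has even order. -/

open Equiv Equiv.Perm Subgroup

theorem Sylow.dvd_card_normalizer {G : Type*} [Group G] [Finite G] {p : ℕ} [Fact p.Prime]
    (P : Sylow p G) (hdvd : p ∣ Nat.card G) : p ∣ Nat.card (normalizer (P : Set G)) :=
  (P.dvd_card_of_dvd_card hdvd).trans (card_dvd_of_le le_normalizer)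

section Perm

variable {α : Type*} [Fintype α] [DecidableEq α]

theorem alternatingGroup_ne_top [Nontrivial α] : alternatingGroup α ≠ ⊤ := fun h => by
  simpa [h] using alternatingGroup.index_eq_two (α := α)

theorem Subgroup.le_alternatingGroup_of_odd_card {H : Subgroup (Perm α)}
    (hH : Odd (Nat.card H)) : H ≤ alternatingGroup α := by
  intro g hg
  have hpow : sign g ^ Nat.card H = 1 := by
    rw [← map_pow, ← H.coe_mk g hg, ← H.coe_pow, pow_card_eq_one', H.coe_one, map_one]
  rcases Int.units_eq_one_or (sign g) with h | h
  · exact mem_alternatingGroup.mpr h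
  · rw [h, hH.neg_one_pow] at hpow
    exact absurd hpow (by decide)

theorem Sylow.even_card_normalizer_perm_of_odd [Nontrivial α] {p : ℕ} [Fact p.Prime]
    (hp : Odd p) (P : Sylow p (Perm α)) :
    Even (Nat.card (normalizer ((P : Subgroup (Perm α)) : Set (Perm α)))) := by
  have hP : Odd (Nat.card P) := by
    obtain ⟨k, hk⟩ := IsPGroup.iff_card.mp P.2
    exact hk ▸ hp.pow
  have hsup := P.normalizer_sup_eq_top' (le_alternatingGroup_of_odd_card hP)
  refine Nat.not_odd_iff_even.mp fun hN => alternatingGroup_ne_top (α := α) ?_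
  exact (sup_eq_right.mpr (le_alternatingGroup_of_odd_card hN)).symm.trans hsup

theorem Sylow.even_card_normalizer_perm [Nontrivial α] {p : ℕ} [Fact p.Prime]
    (P : Sylow p (Perm α)) :
    Even (Nat.card (normalizer ((P : Subgroup (Perm α)) : Set (Perm α)))) := by
  rcases (Fact.out : p.Prime).eq_two_or_odd' with rfl | hp
  · have h2 : 2 ∣ Nat.card (Perm α) := by
      rw [Nat.card_perm]
      exact Nat.dvd_factorial two_pos Finite.one_lt_card
    exact even_iff_two_dvd.mpr (P.dvd_card_normalizer h2)
  · exact P.even_card_normalizer_perm_of_odd hp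

end Perm

theorem symmetric_sylow_normalizer_even
    (p : ℕ) [Fact p.Prime] (n : ℕ) (hn : 2 ≤ n)
    (P : Sylow p (Equiv.Perm (Fin n))) :
    Even (Nat.card (Subgroup.normalizer ((P : Subgroup (Equiv.Perm (Fin n))) : Set (Equiv.Perm (Fin n))))) := by
  have : Nontrivial (Fin n) := Fin.nontrivial_iff_two_le.mpr hn
  exact P.even_card_normalizer_perm
end
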